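/- arXiv:1506.03230 — 3 statements merged into one kernel-verified Lean document; each statement's English description precedes it below -/
import Mathlib

section
/- Let B = diag(q_1(z⁻¹)I_{n_1} + R_1 z⁻¹, …, q_m(z⁻¹)I_{n_m} + R_m z⁻¹) be an HTL normal form such that for each j = 1,…,m no two eigenvalues of R_j differ by a nonzero integer. Then ι⁻¹(O^tru_B) = O_B; i.e., a matrix A ∈ M(n, ℂ((z))) satisfies ι(A) ∈ O^tru_B if and only if A = X[B] for some X ∈ GL(n, ℂ[[z]]). -/
/-!
STATEMENT 1: for an HTL normal form `B` whose residue blocks `R_j` have no two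
eigenvalues differing by a nonzero integer, `ι⁻¹(O^tru_B) = O_B`.
-/

open Matrix BigOperators

noncomputable section

/-- Auxiliary: multiply the `k`-th coefficient by `k`. -/
def zmul (f : LaurentSeries ℂ) : LaurentSeries ℂ :=
  { coeff := fun k => (k : ℂ) * f.coeff k
    isPWO_support' := f.isPWO_support'.mono (by
      intro k hk
      simp only [Function.mem_support, ne_eq] at hk ⊢
      intro h
      exact hk (by rw [h, mul_zero])) }

/-- The formal derivative `d/dz` on `ℂ((z))`. -/
def zderiv (f : LaurentSeries ℂ) : LaurentSeries ℂ :=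
  HahnSeries.single (-1 : ℤ) (1 : ℂ) * zmul f

/-- Evaluation of a polynomial at `z⁻¹`. -/
def polyZinv (q : Polynomial ℂ) : LaurentSeries ℂ :=
  q.sum fun k c => HahnSeries.single (-(k : ℤ)) c

/-- A Laurent series lies in `ℂ[[z]]` (no polar part). -/
def Tame (f : LaurentSeries ℂ) : Prop := ∀ k : ℤ, k < 0 → f.coeff k = 0

/-- `GL(n, ℂ[[z]])`. -/
abbrev GLps (n : ℕ) := (Matrix (Fin n) (Fin n) (PowerSeries ℂ))ˣ

/-- The inclusion `GL(n, ℂ[[z]]) → GL(n, ℂ((z)))`. -/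
def glMap {n : ℕ} : GLps n →* (Matrix (Fin n) (Fin n) (LaurentSeries ℂ))ˣ :=
  Units.map ((HahnSeries.ofPowerSeries ℤ ℂ).mapMatrix).toMonoidHom

/-- The holomorphic gaugeT transform `X[B] := XBX⁻¹ + (dX/dz)X⁻¹` for
`X ∈ GL(n, ℂ[[z]])`. -/
def gaugeT {n : ℕ} (X : GLps n) (B : Matrix (Fin n) (Fin n) (LaurentSeries ℂ)) :
    Matrix (Fin n) (Fin n) (LaurentSeries ℂ) :=
  (glMap X).val * B * ((glMap X)⁻¹).val + ((glMap X).val.map zderiv) * ((glMap X)⁻¹).val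

/-- The data of an HTL normal form of size `n`:
`B = diag(q_1(z⁻¹)I_{n_1} + R_1 z⁻¹, …, q_m(z⁻¹)I_{n_m} + R_m z⁻¹)` with the `q_j`
pairwise distinct elements of `s²ℂ[s]` and `R_j ∈ M(n_j, ℂ)`. -/
structure HTLData (n : ℕ) where
  m : ℕ
  nb : Fin m → ℕ
  hn : ∑ j, nb j = n
  q : Fin m → Polynomial ℂ
  hq0 : ∀ j, (q j).coeff 0 = 0
  hq1 : ∀ j, (q j).coeff 1 = 0
  hqd : ∀ j j', j ≠ j' → q j ≠ q j'
  R : (j : Fin m) → Matrix (Fin (nb j)) (Fin (nb j)) ℂ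

namespace HTLData

variable {n : ℕ} (D : HTLData n)

/-- Identification of the disjoint union of the blocks with `Fin n`. -/
def sigmaEquiv : (Σ j : Fin D.m, Fin (D.nb j)) ≃ Fin n :=
  Fintype.equivFinOfCardEq (by simpa using D.hn)

/-- The matrix of the HTL normal form. -/
def mat : Matrix (Fin n) (Fin n) (LaurentSeries ℂ) :=
  Matrix.reindex D.sigmaEquiv D.sigmaEquiv
    (Matrix.blockDiagonal' fun j =>
      (fun a b => (if a = b then polyZinv (D.q j) else 0) +
        HahnSeries.single (-1 : ℤ) (D.R j a b)))

end HTLData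

end

/-!
`X[B] = XBX⁻¹ + X'X⁻¹`, and `X'X⁻¹` is holomorphic: this gives one inclusion. Conversely, if
`A = XBX⁻¹ + N` with `N` holomorphic, then `A = X[B + T]` for the holomorphic
`T = X⁻¹(NX - X')`; since `X[·]` is a group action it suffices to find `Y ∈ GL(n, ℂ[[z]])` with
`Y[B] = B + T`, i.e. `Y' = BY - YB + TY`. With `Y = Σ Y_k z^k`, `Y_0 = 1`, this is solved
coefficient by coefficient. On the diagonal block `j` the `z^k`-coefficient reads
`(k + 1) Y_{k+1} - [R_j, Y_{k+1}] = (TY)_k`, which is uniquely solvable because `k + 1` is not a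
difference of eigenvalues of `R_j` (Sylvester). Off the diagonal blocks the polynomial
`q_j - q_{j'}` has degree `d ≥ 2`, and the `z^{k-d}`-coefficient determines `Y_k` through the
leading coefficient of `q_j - q_{j'}` in terms of `Y_0, …, Y_{k-1}`.
-/

open Polynomial

theorem Nat.exists_eq_apply_of_causal {α : Type*} [Nonempty α] (F : (ℕ → α) → ℕ → α)
    (hF : ∀ g g' k, (∀ m < k, g m = g' m) → F g k = F g' k) :
    ∃ g : ℕ → α, ∀ k, g k = F g k := by
  let g : ℕ → α := Nat.strongRec fun k prev =>
    F (fun m => if h : m < k then prev m h else Classical.arbitrary α) k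
  refine ⟨g, fun k => ?_⟩
  rw [show g k = _ from Nat.strongRec_eq _ k]
  exact hF _ _ k fun m hm => dif_pos hm

lemma Polynomial.sum_eq_eraseLead_sum_add {S M : Type*} [Semiring S] [AddCommMonoid M]
    [Module S M] (f : S[X]) (w : ℕ → M) :
    (f.sum fun d a => a • w d) =
      (f.eraseLead.sum fun d a => a • w d) + f.leadingCoeff • w f.natDegree := by
  conv_lhs => rw [← eraseLead_add_monomial_natDegree_leadingCoeff f]
  rw [sum_add_index _ _ (fun d a => a • w d) (fun _ => zero_smul S _) fun _ _ _ => add_smul _ _ _,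
    sum_monomial_index _ _ (zero_smul S _)]

lemma Polynomial.two_le_natDegree_of_coeff_zero_of_coeff_one {S : Type*} [Semiring S] {f : S[X]}
    (hf : f ≠ 0) (h0 : f.coeff 0 = 0) (h1 : f.coeff 1 = 0) : 2 ≤ f.natDegree := by
  by_contra h
  refine hf ?_
  rw [eq_X_add_C_of_natDegree_le_one (by omega : f.natDegree ≤ 1), h0, h1]
  simp

lemma SemiconjBy.aeval {S A : Type*} [CommSemiring S] [Semiring A] [Algebra S A] {w a b : A}
    (h : SemiconjBy w b a) (f : S[X]) : SemiconjBy w (aeval b f) (aeval a f) := by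
  simp only [SemiconjBy, aeval_eq_sum_range, Finset.mul_sum, Finset.sum_mul, mul_smul_comm,
    smul_mul_assoc, (h.pow_right _).eq]

section Sylvester

variable {K : Type*} [Field K] [IsAlgClosed K] {m : Type*} [Fintype m] [DecidableEq m]

theorem Matrix.exists_mul_sub_mul_eq_of_disjoint_spectrum {A B : Matrix m m K}
    (h : Disjoint (spectrum K A) (spectrum K B)) (G : Matrix m m K) :
    ∃ W : Matrix m m K, A * W - W * B = G := by
  suffices hinj : Function.Injective (LinearMap.mulLeft K A - LinearMap.mulRight K B) from
    LinearMap.injective_iff_surjective.1 hinj G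
  rw [← LinearMap.ker_eq_bot, LinearMap.ker_eq_bot']
  intro W hW
  rcases isEmpty_or_nonempty m with hm | hm
  · exact Subsingleton.elim _ _
  have hW : SemiconjBy W B A := (sub_eq_zero.1 hW).symm
  -- `χ_A(B)` is invertible, since `χ_A` does not vanish on the spectrum of `B`
  have hunit : IsUnit (aeval B A.charpoly) := by
    rw [← spectrum.zero_notMem_iff K, spectrum.map_polynomial_aeval_of_degree_pos B A.charpoly
      (by rw [Matrix.charpoly_degree_eq_dim]; exact_mod_cast Fintype.card_pos)]
    rintro ⟨b, hb, hb0⟩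
    exact h.notMem_of_mem_right hb (Matrix.mem_spectrum_iff_isRoot_charpoly.2 hb0)
  have hzero : W * aeval B A.charpoly = 0 := by
    rw [(hW.aeval _).eq, Matrix.aeval_self_charpoly, zero_mul]
  simpa using hunit.mul_left_eq_zero.1 hzero

theorem Matrix.exists_smul_sub_commutator_eq {R : Matrix m m K}
    (hev : ∀ a ∈ spectrum K R, ∀ b ∈ spectrum K R, ∀ N : ℤ, a - b = (N : K) → N = 0)
    (k : ℕ) (G : Matrix m m K) : ∃ V : Matrix m m K, ((k : K) + 1) • V - (R * V - V * R) = G := by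
  have hdisj : Disjoint (spectrum K R) (spectrum K (R + algebraMap K _ ((k : K) + 1))) := by
    rw [Set.disjoint_left]
    intro x hx hx'
    rw [← spectrum.add_singleton_eq] at hx'
    obtain ⟨y, hy, _, rfl, rfl⟩ := hx'
    have := hev _ hx y hy (k + 1) (by push_cast; ring)
    omega
  obtain ⟨V, hV⟩ := Matrix.exists_mul_sub_mul_eq_of_disjoint_spectrum hdisj (-G)
  refine ⟨V, ?_⟩
  rw [mul_add, Algebra.algebraMap_eq_smul_one, mul_smul_comm, mul_one] at hV
  rw [← neg_neg G, ← hV]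
  abel

end Sylvester

lemma HahnSeries.coeff_single_neg_mul {S : Type*} [Semiring S] (d : ℤ) (a : S)
    (f : LaurentSeries S) (t : ℤ) : (single (-d) a * f).coeff t = a * f.coeff (t + d) := by
  simpa using coeff_single_mul_add (r := a) (x := f) (a := t + d) (b := -d)

lemma HahnSeries.coeff_ofPowerSeries_of_neg {S : Type*} [Semiring S] (g : PowerSeries S) {t : ℤ}
    (ht : t < 0) : (ofPowerSeries ℤ S g).coeff t = 0 := by
  rw [PowerSeries.coeff_coe, if_pos ht]

lemma Matrix.map_derivative_mul {S ι : Type*} [CommSemiring S] [Fintype ι]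
    (Y Z : Matrix ι ι (PowerSeries S)) :
    (Y * Z).map (PowerSeries.derivative S) =
      Y.map (PowerSeries.derivative S) * Z + Y * Z.map (PowerSeries.derivative S) := by
  ext i j : 1
  simp only [Matrix.map_apply, Matrix.mul_apply, Matrix.add_apply, map_sum, Derivation.leibniz,
    smul_eq_mul, ← Finset.sum_add_distrib]
  exact Finset.sum_congr rfl fun k _ => by ring

lemma Matrix.dvd_mul_sub_mul_apply {S ι : Type*} [CommRing S] [Fintype ι] (T : Matrix ι ι S)
    {Y Y' : Matrix ι ι S} {a : S} (h : ∀ i j, a ∣ (Y - Y') i j) (i j : ι) :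
    a ∣ (T * Y - T * Y') i j := by
  rw [← Matrix.mul_sub, Matrix.mul_apply]
  exact Finset.dvd_sum fun k _ => (h k j).mul_left _

lemma zderiv_coeff (f : LaurentSeries ℂ) (t : ℤ) :
    (zderiv f).coeff t = (t + 1 : ℂ) * f.coeff (t + 1) := by
  rw [zderiv, HahnSeries.coeff_single_neg_mul 1]
  simp [zmul]

lemma zderiv_ofPowerSeries (g : PowerSeries ℂ) :
    zderiv (HahnSeries.ofPowerSeries ℤ ℂ g) =
      HahnSeries.ofPowerSeries ℤ ℂ (PowerSeries.derivative ℂ g) := by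
  ext t
  rw [zderiv_coeff]
  rcases t with n | n
  · have h : (HahnSeries.ofPowerSeries ℤ ℂ g).coeff ((n : ℤ) + 1) =
        PowerSeries.coeff (n + 1) g := by
      exact_mod_cast HahnSeries.ofPowerSeries_apply_coeff g (n + 1)
    simp [h, PowerSeries.coeff_derivative, mul_comm]
  · rw [HahnSeries.coeff_ofPowerSeries_of_neg _ (Int.negSucc_lt_zero n)]
    rcases n with _ | n
    · simp
    · rw [HahnSeries.coeff_ofPowerSeries_of_neg _ (by omega), mul_zero]

lemma polyZinv_sub (f g : ℂ[X]) : polyZinv (f - g) = polyZinv f - polyZinv g := by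
  rw [eq_sub_iff_add_eq, polyZinv, polyZinv, polyZinv, ← sum_add_index _ _ _
    (fun _ => HahnSeries.single_eq_zero) fun _ _ _ => HahnSeries.single_add _ _ _, sub_add_cancel]

lemma polyZinv_mul_coeff (f : ℂ[X]) (g : LaurentSeries ℂ) (t : ℤ) :
    (polyZinv f * g).coeff t = f.sum fun d a => a * g.coeff (t + d) := by
  rw [polyZinv, Polynomial.sum_def, Finset.sum_mul, HahnSeries.coeff_sum, Polynomial.sum_def]
  exact Finset.sum_congr rfl fun d _ => HahnSeries.coeff_single_neg_mul d _ g t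

lemma tame_iff_exists_ofPowerSeries (f : LaurentSeries ℂ) :
    Tame f ↔ ∃ g : PowerSeries ℂ, HahnSeries.ofPowerSeries ℤ ℂ g = f := by
  refine ⟨fun hf => ⟨PowerSeries.mk fun n => f.coeff n, ?_⟩, ?_⟩
  · ext k
    rw [PowerSeries.coeff_coe]
    split_ifs with hk
    · exact (hf k hk).symm
    · rw [PowerSeries.coeff_mk, Int.natAbs_of_nonneg (not_lt.1 hk)]
  · rintro ⟨g, rfl⟩ k hk
    exact HahnSeries.coeff_ofPowerSeries_of_neg g hk

section LaurentMatrix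

variable {ι : Type*}

def coeffMatrix (M : Matrix ι ι (LaurentSeries ℂ)) (s : ℤ) : Matrix ι ι ℂ :=
  M.map fun f => f.coeff s

lemma coeffMatrix_add (M M' : Matrix ι ι (LaurentSeries ℂ)) (s : ℤ) :
    coeffMatrix (M + M') s = coeffMatrix M s + coeffMatrix M' s := by
  ext; simp [coeffMatrix]

lemma coeffMatrix_sub (M M' : Matrix ι ι (LaurentSeries ℂ)) (s : ℤ) :
    coeffMatrix (M - M') s = coeffMatrix M s - coeffMatrix M' s := by
  ext; simp [coeffMatrix]

def ofCoeffs (C : ℕ → Matrix ι ι ℂ) : Matrix ι ι (PowerSeries ℂ) :=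
  Matrix.of fun i j => PowerSeries.mk fun k => C k i j

lemma X_pow_dvd_ofCoeffs_sub {C C' : ℕ → Matrix ι ι ℂ} {n : ℕ} (h : ∀ m < n, C m = C' m)
    (i j : ι) : PowerSeries.X ^ n ∣ (ofCoeffs C - ofCoeffs C') i j := by
  refine PowerSeries.X_pow_dvd_iff.2 fun m hm => ?_
  simp [ofCoeffs, h m hm]

variable [Fintype ι]

lemma coeffMatrix_map_single_mul (R : Matrix ι ι ℂ) (M : Matrix ι ι (LaurentSeries ℂ)) (t : ℤ) :
    coeffMatrix (R.map (HahnSeries.single (-1 : ℤ)) * M) t = R * coeffMatrix M (t + 1) := by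
  ext i j
  simp [coeffMatrix, Matrix.mul_apply, HahnSeries.coeff_single_neg_mul 1]

lemma coeffMatrix_mul_map_single (R : Matrix ι ι ℂ) (M : Matrix ι ι (LaurentSeries ℂ)) (t : ℤ) :
    coeffMatrix (M * R.map (HahnSeries.single (-1 : ℤ))) t = coeffMatrix M (t + 1) * R := by
  ext i j
  simp only [coeffMatrix, Matrix.map_apply, Matrix.mul_apply, HahnSeries.coeff_sum]
  exact Finset.sum_congr rfl fun k _ => by
    rw [mul_comm, HahnSeries.coeff_single_neg_mul 1, mul_comm]

variable [DecidableEq ι]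

noncomputable abbrev toLaurentMatrix :
    Matrix ι ι (PowerSeries ℂ) →+* Matrix ι ι (LaurentSeries ℂ) :=
  (HahnSeries.ofPowerSeries ℤ ℂ).mapMatrix

lemma tame_toLaurentMatrix_apply (Y : Matrix ι ι (PowerSeries ℂ)) (i j : ι) :
    Tame (toLaurentMatrix Y i j) :=
  (tame_iff_exists_ofPowerSeries _).2 ⟨Y i j, rfl⟩

lemma exists_toLaurentMatrix_eq {M : Matrix ι ι (LaurentSeries ℂ)} (hM : ∀ i j, Tame (M i j)) :
    ∃ Y : Matrix ι ι (PowerSeries ℂ), toLaurentMatrix Y = M := by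
  choose Y hY using fun i j => (tame_iff_exists_ofPowerSeries _).1 (hM i j)
  exact ⟨Matrix.of Y, Matrix.ext hY⟩

lemma map_zderiv_toLaurentMatrix (Y : Matrix ι ι (PowerSeries ℂ)) :
    (toLaurentMatrix Y).map zderiv = toLaurentMatrix (Y.map (PowerSeries.derivative ℂ)) := by
  ext i j : 1
  exact zderiv_ofPowerSeries (Y i j)

lemma coeffMatrix_toLaurentMatrix_natCast (Y : Matrix ι ι (PowerSeries ℂ)) (k : ℕ) :
    coeffMatrix (toLaurentMatrix Y) k = Y.map (PowerSeries.coeff k) := by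
  ext i j
  exact HahnSeries.ofPowerSeries_apply_coeff (Y i j) k

lemma coeffMatrix_toLaurentMatrix_of_neg (Y : Matrix ι ι (PowerSeries ℂ)) {s : ℤ} (hs : s < 0) :
    coeffMatrix (toLaurentMatrix Y) s = 0 := by
  ext i j
  exact HahnSeries.coeff_ofPowerSeries_of_neg (Y i j) hs

lemma coeffMatrix_toLaurentMatrix_ofCoeffs (C : ℕ → Matrix ι ι ℂ) (k : ℕ) :
    coeffMatrix (toLaurentMatrix (ofCoeffs C)) k = C k := by
  rw [coeffMatrix_toLaurentMatrix_natCast]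
  ext i j
  simp [ofCoeffs]

lemma coeffMatrix_toLaurentMatrix_eq_of_X_pow_dvd {Y Y' : Matrix ι ι (PowerSeries ℂ)} {n : ℕ}
    (h : ∀ i j, PowerSeries.X ^ n ∣ (Y - Y') i j) {s : ℤ} (hs : s < n) :
    coeffMatrix (toLaurentMatrix Y) s = coeffMatrix (toLaurentMatrix Y') s := by
  rcases lt_or_ge s 0 with hs0 | hs0
  · rw [coeffMatrix_toLaurentMatrix_of_neg Y hs0, coeffMatrix_toLaurentMatrix_of_neg Y' hs0]
  lift s to ℕ using hs0
  rw [coeffMatrix_toLaurentMatrix_natCast, coeffMatrix_toLaurentMatrix_natCast]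
  ext i j
  have := PowerSeries.X_pow_dvd_iff.1 (h i j) s (by exact_mod_cast hs)
  rwa [Matrix.sub_apply, map_sub, sub_eq_zero] at this

lemma isUnit_ofCoeffs {C : ℕ → Matrix ι ι ℂ} (hC : C 0 = 1) : IsUnit (ofCoeffs C) := by
  rw [Matrix.isUnit_iff_isUnit_det, PowerSeries.isUnit_iff_constantCoeff, RingHom.map_det]
  have : (ofCoeffs C).map PowerSeries.constantCoeff = 1 := by
    ext i j
    simp [ofCoeffs, ← PowerSeries.coeff_zero_eq_constantCoeff_apply, hC]
  rw [RingHom.mapMatrix_apply, this, Matrix.det_one]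
  exact isUnit_one

end LaurentMatrix

section Gauge

variable {n : ℕ}

lemma glMap_val (X : GLps n) : (glMap X).val = toLaurentMatrix X.val := rfl

lemma glMap_inv_val (X : GLps n) : ((glMap X)⁻¹).val = toLaurentMatrix X⁻¹.val := by
  rw [← map_inv]; rfl

lemma gaugeT_eq (X : GLps n) (B : Matrix (Fin n) (Fin n) (LaurentSeries ℂ)) :
    gaugeT X B = toLaurentMatrix X.val * B * toLaurentMatrix X⁻¹.val +
      toLaurentMatrix (X.val.map (PowerSeries.derivative ℂ) * X⁻¹.val) := by
  rw [gaugeT, glMap_val, glMap_inv_val, map_zderiv_toLaurentMatrix, map_mul]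

lemma gaugeT_eq_iff (X : GLps n) (B C : Matrix (Fin n) (Fin n) (LaurentSeries ℂ)) :
    gaugeT X B = C ↔
      toLaurentMatrix X.val * B + (toLaurentMatrix X.val).map zderiv =
        C * toLaurentMatrix X.val := by
  have hinv : toLaurentMatrix X⁻¹.val * toLaurentMatrix X.val = 1 := by
    rw [← map_mul, Units.inv_mul, map_one]
  have hinv' : toLaurentMatrix X.val * toLaurentMatrix X⁻¹.val = 1 := by
    rw [← map_mul, Units.mul_inv, map_one]
  rw [gaugeT, glMap_val, glMap_inv_val, ← add_mul]
  constructor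
  · rintro rfl
    rw [mul_assoc, hinv, mul_one]
  · intro h
    rw [h, mul_assoc, hinv', mul_one]

lemma gaugeT_add (X : GLps n) (B C : Matrix (Fin n) (Fin n) (LaurentSeries ℂ)) :
    gaugeT X (B + C) = gaugeT X B + toLaurentMatrix X.val * C * toLaurentMatrix X⁻¹.val := by
  rw [gaugeT_eq, gaugeT_eq, mul_add, add_mul]
  abel

lemma gaugeT_mul (X Y : GLps n) (B : Matrix (Fin n) (Fin n) (LaurentSeries ℂ)) :
    gaugeT (X * Y) B = gaugeT X (gaugeT Y B) := by
  have hderiv : (X * Y).val.map (PowerSeries.derivative ℂ) * (X * Y)⁻¹.val =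
      X.val.map (PowerSeries.derivative ℂ) * X⁻¹.val +
        X.val * (Y.val.map (PowerSeries.derivative ℂ) * Y⁻¹.val) * X⁻¹.val := by
    simp only [Units.val_mul, _root_.mul_inv_rev, Matrix.map_derivative_mul, add_mul, mul_assoc,
      Units.mul_inv_cancel_left]
  rw [gaugeT_eq Y, gaugeT_add, gaugeT_eq, gaugeT_eq, hderiv, map_add,
    map_mul (f := toLaurentMatrix), map_mul (f := toLaurentMatrix)]
  simp only [Units.val_mul, _root_.mul_inv_rev, map_mul, mul_assoc]
  abel

end Gauge

section NormalForm

variable {ι : Type*} [Fintype ι] [DecidableEq ι]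

noncomputable def htlForm (p : ι → ℂ[X]) (R : Matrix ι ι ℂ) : Matrix ι ι (LaurentSeries ℂ) :=
  diagonal (fun i => polyZinv (p i)) + R.map (HahnSeries.single (-1 : ℤ))

lemma coeffMatrix_htlForm_mul_sub_mul (p : ι → ℂ[X]) (R : Matrix ι ι ℂ)
    (M : Matrix ι ι (LaurentSeries ℂ)) (t : ℤ) (i i' : ι) :
    coeffMatrix (htlForm p R * M - M * htlForm p R) t i i' =
      (p i - p i').sum (fun d a => a * coeffMatrix M (t + d) i i') +
        (R * coeffMatrix M (t + 1) - coeffMatrix M (t + 1) * R) i i' := by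
  set P := diagonal fun i => polyZinv (p i)
  set Rz := R.map (HahnSeries.single (-1 : ℤ))
  have hdiag : (P * M - M * P) i i' = polyZinv (p i - p i') * M i i' := by
    rw [Matrix.sub_apply, diagonal_mul, mul_diagonal, mul_comm (M i i'), polyZinv_sub, sub_mul]
  have hsplit : htlForm p R * M - M * htlForm p R = (P * M - M * P) + (Rz * M - M * Rz) := by
    rw [htlForm, add_mul, mul_add]
    abel
  rw [hsplit, coeffMatrix_add, Matrix.add_apply]
  congr 1
  · rw [coeffMatrix, Matrix.map_apply, hdiag, polyZinv_mul_coeff]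
    rfl
  · rw [coeffMatrix_sub, coeffMatrix_map_single_mul, coeffMatrix_mul_map_single]

/-- The `z^t`-coefficient of the `(i, i')` entry of `Y' = BY - YB + TY` for `B = htlForm p R`,
where `c` and `G` are the coefficient matrices of `Y` and `TY`. -/
def GaugeCoeffEq (p : ι → ℂ[X]) (R : Matrix ι ι ℂ) (c G : ℤ → Matrix ι ι ℂ) (i i' : ι) : Prop :=
  ∀ t : ℤ, (t + 1 : ℂ) * c (t + 1) i i' = (p i - p i').sum (fun d a => a * c (t + d) i i') +
    (R * c (t + 1) - c (t + 1) * R) i i' + G t i i'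

lemma mul_htlForm_add_map_zderiv_eq {p : ι → ℂ[X]} {R : Matrix ι ι ℂ}
    (Y T : Matrix ι ι (PowerSeries ℂ))
    (h : ∀ i i', GaugeCoeffEq p R (coeffMatrix (toLaurentMatrix Y))
      (coeffMatrix (toLaurentMatrix (T * Y))) i i') :
    toLaurentMatrix Y * htlForm p R + (toLaurentMatrix Y).map zderiv =
      (htlForm p R + toLaurentMatrix T) * toLaurentMatrix Y := by
  have hderiv : (toLaurentMatrix Y).map zderiv = (htlForm p R * toLaurentMatrix Y -
      toLaurentMatrix Y * htlForm p R) + toLaurentMatrix (T * Y) := by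
    ext i i' t
    have hB := coeffMatrix_htlForm_mul_sub_mul p R (toLaurentMatrix Y) t i i'
    rw [Matrix.map_apply, zderiv_coeff, Matrix.add_apply, HahnSeries.coeff_add]
    exact (h i i' t).trans (by rw [← hB]; rfl)
  rw [hderiv, map_mul, add_mul]
  abel

end NormalForm

section Recursion

variable {ι : Type*} [Fintype ι]

-- At an entry `(i, i')` with `f = p i - p i'` of degree `≥ 2`, the `z^t`-equation has top term
-- `f.leadingCoeff * Y_{t + f.natDegree}`; this is the rest, which involves lower coefficients only.
noncomputable def offBlockRhs (R : Matrix ι ι ℂ) (f : ℂ[X]) (c G : ℤ → Matrix ι ι ℂ) (t : ℤ)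
    (i i' : ι) : ℂ :=
  (t + 1 : ℂ) * c (t + 1) i i' - f.eraseLead.sum (fun d a => a * c (t + d) i i') -
    (R * c (t + 1) - c (t + 1) * R) i i' - G t i i'

lemma offBlockRhs_congr {R : Matrix ι ι ℂ} {f : ℂ[X]} (hf : 2 ≤ f.natDegree)
    {c c' G G' : ℤ → Matrix ι ι ℂ} {k : ℕ} (hc : ∀ s : ℤ, s < k → c s = c' s)
    (hG : ∀ s : ℤ, s < k → G s = G' s) (i i' : ι) :
    offBlockRhs R f c G (k - f.natDegree) i i' = offBlockRhs R f c' G' (k - f.natDegree) i i' := by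
  have hsum : f.eraseLead.sum (fun d a => a * c (k - f.natDegree + d) i i') =
      f.eraseLead.sum (fun d a => a * c' (k - f.natDegree + d) i i') := by
    refine Finset.sum_congr rfl fun d hd => ?_
    have := (le_natDegree_of_mem_supp d hd).trans (eraseLead_natDegree_le f)
    dsimp only
    rw [hc _ (by omega)]
  rw [offBlockRhs, offBlockRhs, hsum, hc _ (by omega), hG _ (by omega)]

lemma commutator_apply_congr {p : ι → ℂ[X]} {R : Matrix ι ι ℂ}
    (hR : ∀ i i', p i ≠ p i' → R i i' = 0) {M M' : Matrix ι ι ℂ}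
    (h : ∀ i i', p i = p i' → M i i' = M' i i') {i i' : ι} (hp : p i = p i') :
    (R * M - M * R) i i' = (R * M' - M' * R) i i' := by
  simp only [Matrix.sub_apply, Matrix.mul_apply]
  congr 1 <;> refine Finset.sum_congr rfl fun k _ => ?_
  · by_cases hk : p i = p k
    · rw [h k i' (hk ▸ hp)]
    · rw [hR i k hk, zero_mul, zero_mul]
  · by_cases hk : p k = p i'
    · rw [h i k (hp.trans hk.symm)]
    · rw [hR k i' hk, mul_zero, mul_zero]

variable [DecidableEq ι] (p : ι → ℂ[X]) (R : Matrix ι ι ℂ)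

noncomputable def coeffStep (T : Matrix ι ι (PowerSeries ℂ))
    (W : ℕ → Matrix ι ι ℂ → Matrix ι ι ℂ) (C : ℕ → Matrix ι ι ℂ) : ℕ → Matrix ι ι ℂ
  | 0 => 1
  | k + 1 => Matrix.of fun i i' =>
      if p i = p i' then W k (coeffMatrix (toLaurentMatrix (T * ofCoeffs C)) k) i i'
      else (p i - p i').leadingCoeff⁻¹ *
        offBlockRhs R (p i - p i') (coeffMatrix (toLaurentMatrix (ofCoeffs C)))
          (coeffMatrix (toLaurentMatrix (T * ofCoeffs C)))
          ((k + 1 : ℕ) - (p i - p i').natDegree) i i'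

lemma coeffStep_causal (hdeg : ∀ i i', p i ≠ p i' → 2 ≤ (p i - p i').natDegree)
    (T : Matrix ι ι (PowerSeries ℂ)) (W : ℕ → Matrix ι ι ℂ → Matrix ι ι ℂ)
    (C C' : ℕ → Matrix ι ι ℂ) (k : ℕ) (h : ∀ m < k, C m = C' m) :
    coeffStep p R T W C k = coeffStep p R T W C' k := by
  cases k with
  | zero => rfl
  | succ k =>
    have hY := X_pow_dvd_ofCoeffs_sub h
    have hc := fun s (hs : s < ((k + 1 : ℕ) : ℤ)) =>
      coeffMatrix_toLaurentMatrix_eq_of_X_pow_dvd hY hs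
    have hG := fun s (hs : s < ((k + 1 : ℕ) : ℤ)) =>
      coeffMatrix_toLaurentMatrix_eq_of_X_pow_dvd (Matrix.dvd_mul_sub_mul_apply T hY) hs
    ext i i'
    simp only [coeffStep, Matrix.of_apply]
    split_ifs with hp
    · rw [hG k (by omega)]
    · rw [offBlockRhs_congr (hdeg i i' hp) hc hG]

variable {p R}

lemma gaugeCoeffEq_of_eq (hR : ∀ i i', p i ≠ p i' → R i i' = 0)
    {W : ℕ → Matrix ι ι ℂ → Matrix ι ι ℂ} (hW : ∀ (k : ℕ) G i i', p i = p i' →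
      (((k : ℂ) + 1) • W k G - (R * W k G - W k G * R)) i i' = G i i')
    {c G : ℤ → Matrix ι ι ℂ} (hc0 : c 0 = 1) (hc : ∀ s < 0, c s = 0) (hG : ∀ s < 0, G s = 0)
    (hstep : ∀ (k : ℕ) i i', p i = p i' → c (k + 1) i i' = W k (G k) i i')
    {i i' : ι} (hp : p i = p i') : GaugeCoeffEq p R c G i i' := by
  intro t
  rw [hp, sub_self, sum_zero_index, zero_add]
  rcases lt_or_ge t 0 with ht | ht
  · rw [hG t ht, Matrix.zero_apply, add_zero]
    rcases (by omega : t + 1 = 0 ∨ t + 1 < 0) with h0 | hneg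
    · have h0' : (t : ℂ) + 1 = 0 := by exact_mod_cast h0
      rw [h0, hc0, h0', zero_mul, Matrix.mul_one, Matrix.one_mul, sub_self, Matrix.zero_apply]
    · rw [hc _ hneg]
      simp
  · lift t to ℕ using ht
    rw [commutator_apply_congr hR (fun i i' h => hstep t i i' h) hp, hstep t i i' hp]
    have := hW t (G t) i i' hp
    rw [Matrix.sub_apply, Matrix.smul_apply, smul_eq_mul] at this
    linear_combination this

lemma gaugeCoeffEq_of_ne {c G : ℤ → Matrix ι ι ℂ} (hc0 : c 0 = 1) (hc : ∀ s < 0, c s = 0)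
    (hG : ∀ s < 0, G s = 0) {i i' : ι} (hp : p i ≠ p i') (hdeg : 2 ≤ (p i - p i').natDegree)
    (hstep : ∀ k : ℕ, c (k + 1) i i' = (p i - p i').leadingCoeff⁻¹ *
      offBlockRhs R (p i - p i') c G ((k + 1 : ℕ) - (p i - p i').natDegree) i i') :
    GaugeCoeffEq p R c G i i' := by
  intro t
  set f := p i - p i'
  have hlc : f.leadingCoeff ≠ 0 := leadingCoeff_ne_zero.2 (sub_ne_zero.2 hp)
  have hsplit := Polynomial.sum_eq_eraseLead_sum_add f fun d => c (t + d) i i'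
  simp only [smul_eq_mul] at hsplit
  rw [hsplit]
  rcases lt_or_ge (t + f.natDegree) 1 with ht | ht
  · have hvanish : ∀ s ≤ t + f.natDegree, c s i i' = 0 := by
      intro s hs
      rcases (by omega : s = 0 ∨ s < 0) with rfl | hs0
      · rw [hc0, Matrix.one_apply_ne fun h => hp (congrArg p h)]
      · rw [hc s hs0, Matrix.zero_apply]
    have hsum : f.eraseLead.sum (fun d a => a * c (t + d) i i') = 0 :=
      Finset.sum_eq_zero fun d hd => by
        have := (le_natDegree_of_mem_supp d hd).trans (eraseLead_natDegree_le _)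
        dsimp only
        rw [hvanish _ (by omega), mul_zero]
    rw [hsum, hvanish _ le_rfl, hc _ (by omega), hG _ (by omega)]
    simp
  · obtain ⟨k, hk⟩ : ∃ k : ℕ, t + f.natDegree = k + 1 :=
      ⟨(t + f.natDegree - 1).toNat, by omega⟩
    have h := hstep k
    rw [show ((k + 1 : ℕ) : ℤ) - f.natDegree = t by omega, offBlockRhs, ← hk] at h
    field_simp at h
    linear_combination -h

theorem exists_mul_htlForm_add_map_zderiv_eq (hR : ∀ i i', p i ≠ p i' → R i i' = 0)
    (hdeg : ∀ i i', p i ≠ p i' → 2 ≤ (p i - p i').natDegree)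
    (hsylv : ∀ (k : ℕ) (G : Matrix ι ι ℂ), ∃ W : Matrix ι ι ℂ,
      ∀ i i', p i = p i' → (((k : ℂ) + 1) • W - (R * W - W * R)) i i' = G i i')
    (T : Matrix ι ι (PowerSeries ℂ)) :
    ∃ Y : (Matrix ι ι (PowerSeries ℂ))ˣ, toLaurentMatrix Y.val * htlForm p R +
      (toLaurentMatrix Y.val).map zderiv =
        (htlForm p R + toLaurentMatrix T) * toLaurentMatrix Y.val := by
  choose W hW using hsylv
  obtain ⟨C, hC⟩ := Nat.exists_eq_apply_of_causal _ (coeffStep_causal p R hdeg T W)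
  have hc : ∀ k : ℕ, coeffMatrix (toLaurentMatrix (ofCoeffs C)) k = coeffStep p R T W C k :=
    fun k => (coeffMatrix_toLaurentMatrix_ofCoeffs C k).trans (hC k)
  have hneg := fun s => coeffMatrix_toLaurentMatrix_of_neg (s := s) (ofCoeffs C)
  have hneg' := fun s => coeffMatrix_toLaurentMatrix_of_neg (s := s) (T * ofCoeffs C)
  refine ⟨(isUnit_ofCoeffs (hC 0)).unit, mul_htlForm_add_map_zderiv_eq _ _ fun i i' => ?_⟩
  by_cases hp : p i = p i'
  · refine gaugeCoeffEq_of_eq hR hW (hc 0) hneg hneg' (fun k i i' hp => ?_) hp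
    rw [← Nat.cast_succ, hc, coeffStep, Matrix.of_apply, if_pos hp]
  · refine gaugeCoeffEq_of_ne (hc 0) hneg hneg' hp (hdeg i i' hp) fun k => ?_
    rw [← Nat.cast_succ, hc, coeffStep, Matrix.of_apply, if_neg hp]

end Recursion

namespace HTLData

variable {n : ℕ} (D : HTLData n)

lemma mat_eq_htlForm :
    D.mat = htlForm (fun i => D.q (D.sigmaEquiv.symm i).1)
      (reindex D.sigmaEquiv D.sigmaEquiv (blockDiagonal' D.R)) := by
  ext i i' : 1
  obtain ⟨⟨j, a⟩, rfl⟩ := D.sigmaEquiv.surjective i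
  obtain ⟨⟨j', b⟩, rfl⟩ := D.sigmaEquiv.surjective i'
  simp only [HTLData.mat, htlForm, reindex_apply, submatrix_apply, Equiv.symm_apply_apply,
    Matrix.add_apply, diagonal_apply, Matrix.map_apply, EmbeddingLike.apply_eq_iff_eq]
  by_cases h : j = j'
  · subst h
    refine (blockDiagonal'_apply_eq _ _ _ _).trans ?_
    simp only [Sigma.mk.injEq, heq_eq_eq, true_and, blockDiagonal'_apply_eq]
  · refine (blockDiagonal'_apply_ne _ _ _ h).trans ?_
    simp [h, blockDiagonal'_apply_ne _ _ _ h]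

lemma exists_smul_sub_commutator_eq_on_blocks
    (hev : ∀ (j : Fin D.m), ∀ a ∈ spectrum ℂ (D.R j), ∀ b ∈ spectrum ℂ (D.R j),
      ∀ N : ℤ, a - b = (N : ℂ) → N = 0) (k : ℕ) (G : Matrix (Fin n) (Fin n) ℂ) :
    ∃ W : Matrix (Fin n) (Fin n) ℂ, ∀ i i',
      D.q (D.sigmaEquiv.symm i).1 = D.q (D.sigmaEquiv.symm i').1 →
      (((k : ℂ) + 1) • W - (reindex D.sigmaEquiv D.sigmaEquiv (blockDiagonal' D.R) * W -
        W * reindex D.sigmaEquiv D.sigmaEquiv (blockDiagonal' D.R))) i i' = G i i' := by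
  set ρ := reindexAlgEquiv ℂ ℂ D.sigmaEquiv
  set Gσ := reindex D.sigmaEquiv.symm D.sigmaEquiv.symm G
  choose V hV using fun j => Matrix.exists_smul_sub_commutator_eq (hev j) k (blockDiag' Gσ j)
  refine ⟨ρ (blockDiagonal' V), fun i i' hq => ?_⟩
  have hblock : ((k : ℂ) + 1) • ρ (blockDiagonal' V) - (ρ (blockDiagonal' D.R) *
      ρ (blockDiagonal' V) - ρ (blockDiagonal' V) * ρ (blockDiagonal' D.R)) =
      ρ (blockDiagonal' fun j => blockDiag' Gσ j) := by
    have hV' : (fun j => blockDiag' Gσ j) = ((k : ℂ) + 1) • V - (D.R * V - V * D.R) :=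
      (funext hV).symm
    have hmul : ∀ M N : ∀ j, Matrix (Fin (D.nb j)) (Fin (D.nb j)) ℂ,
        blockDiagonal' (M * N) = blockDiagonal' M * blockDiagonal' N :=
      fun M N => blockDiagonal'_mul M N
    rw [hV', blockDiagonal'_sub, blockDiagonal'_smul, blockDiagonal'_sub, hmul, hmul, map_sub,
      map_smul, map_sub, map_mul, map_mul]
  obtain ⟨⟨j, a⟩, rfl⟩ := D.sigmaEquiv.surjective i
  obtain ⟨⟨j', b⟩, rfl⟩ := D.sigmaEquiv.surjective i'
  rw [Equiv.symm_apply_apply, Equiv.symm_apply_apply] at hq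
  obtain rfl : j = j' := by_contra fun h => D.hqd j j' h hq
  refine (congrFun (congrFun hblock _) _).trans ?_
  simp only [ρ, Gσ, coe_reindexAlgEquiv, reindex_apply, submatrix_apply, Equiv.symm_symm,
    Equiv.symm_apply_apply, blockDiagonal'_apply_eq]
  rfl

lemma exists_gaugeT_eq_add
    (hev : ∀ (j : Fin D.m), ∀ a ∈ spectrum ℂ (D.R j), ∀ b ∈ spectrum ℂ (D.R j),
      ∀ N : ℤ, a - b = (N : ℂ) → N = 0)
    (T : Matrix (Fin n) (Fin n) (PowerSeries ℂ)) :
    ∃ Y : GLps n, gaugeT Y D.mat = D.mat + toLaurentMatrix T := by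
  obtain ⟨Y, hY⟩ := exists_mul_htlForm_add_map_zderiv_eq
    (fun i i' hp => by
      rw [reindex_apply, submatrix_apply, blockDiagonal'_apply, dif_neg fun h => hp (by rw [h])])
    (fun i i' hp => Polynomial.two_le_natDegree_of_coeff_zero_of_coeff_one (sub_ne_zero.2 hp)
      (by simp [D.hq0]) (by simp [D.hq1]))
    (D.exists_smul_sub_commutator_eq_on_blocks hev) T
  rw [← D.mat_eq_htlForm] at hY
  exact ⟨Y, (gaugeT_eq_iff _ _ _).2 hY⟩

end HTLData

/-- if, for each `j`, no two eigenvalues of `R_j` differ by a nonzero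
integer, then a matrix `A` has `ι(A) ∈ O^tru_B` (i.e. `A ≡ X B X⁻¹ mod M(n,ℂ[[z]])` for
some `X ∈ GL(n,ℂ[[z]])`) if and only if `A = X[B]` for some `X ∈ GL(n, ℂ[[z]])`. -/
theorem preimage_truncated_orbit_eq_orbit (n : ℕ) (D : HTLData n)
    (hev : ∀ (j : Fin D.m), ∀ a ∈ spectrum ℂ (D.R j), ∀ b ∈ spectrum ℂ (D.R j),
      ∀ N : ℤ, a - b = (N : ℂ) → N = 0)
    (A : Matrix (Fin n) (Fin n) (LaurentSeries ℂ)) :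
    (∃ X : GLps n,
        ∀ i j, Tame ((A - (glMap X).val * D.mat * ((glMap X)⁻¹).val) i j))
    ↔ (∃ X : GLps n, A = gaugeT X D.mat) := by
  constructor
  · rintro ⟨X, hX⟩
    obtain ⟨N, hN⟩ := exists_toLaurentMatrix_eq hX
    rw [glMap_val, glMap_inv_val, eq_sub_iff_add_eq'] at hN
    -- `A = X[B + T]` for this holomorphic `T`
    obtain ⟨Y, hY⟩ := D.exists_gaugeT_eq_add hev
      (X⁻¹.val * (N * X.val - X.val.map (PowerSeries.derivative ℂ)))
    refine ⟨X * Y, ?_⟩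
    have hT : X.val.map (PowerSeries.derivative ℂ) * X⁻¹.val +
        X.val * (X⁻¹.val * (N * X.val - X.val.map (PowerSeries.derivative ℂ))) * X⁻¹.val = N := by
      rw [Units.mul_inv_cancel_left, sub_mul, mul_assoc N, Units.mul_inv, mul_one, add_sub_cancel]
    rw [gaugeT_mul, hY, gaugeT_add, gaugeT_eq, ← hN, add_assoc, ← map_mul, ← map_mul, ← map_add, hT]
  · rintro ⟨X, rfl⟩
    refine ⟨X, fun i j => ?_⟩
    rw [gaugeT_eq, glMap_val, glMap_inv_val, add_sub_cancel_left]
    exact tame_toLaurentMatrix_apply _ i j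
end

section
/- Let B = Σ_{s=1}^{k} B_s z^{−s} be an HTL normal form of size n and pole order k ≥ 1. For s = 1,…,k−1 let ℂⁿ = ⊕_{t=1}^{m_s} V_{⟨s,t⟩} be the simultaneous eigenspace decomposition of ℂⁿ for (B_{s+1}, B_{s+2}, …, B_k), with surjections π_s: {1,…,m_s} → {1,…,m_{s+1}} such that V_{⟨s,t⟩} ⊆ V_{⟨s+1,π_s(t)⟩}, and fix total orderings ≺ on each {1,…,m_s} such that t₁ ≺ t₂ implies π_s(t₁) ⪯ π_s(t₂). Define 𝔭_s^+ := ⊕_{t₁ ⪰ t₂} Hom(V_{⟨s,t₁⟩}, V_{⟨s,t₂⟩}) and 𝔲_s^− := ⊕_{t₁ ≺ t₂} Hom(V_{⟨s,t₁⟩}, V_{⟨s,t₂⟩}) for s = 1,…,k−1, with 𝔭_k^+ := M(n,ℂ) and 𝔲_k^− := {0}. Set G^o_k := {I_n + Σ_{s=1}^{k−1} g_s z^s} ⊆ GL(n,ℂ[z]/(z^k)), P⁺ := {Σ_{s=0}^{k−1} P_s z^s ∈ G^o_k : P_s ∈ 𝔭_{s+1}^+} and U⁻ := {Σ_{s=0}^{k−1}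 U_s z^s ∈ G^o_k : U_s ∈ 𝔲_{s+1}^− for s ≥ 1}. Then for every g ∈ G^o_k there exist unique u ∈ U⁻ and p ∈ P⁺ with g = u·p. -/
/-!
STATEMENT 7: Gauss decomposition `G^o_k = U⁻ · P⁺` associated with an HTL normal form
`B = Σ_{s=1}^k B_s z^{−s}` and a compatible family of total orderings on the
simultaneous eigenspace decompositions of `(B_{s+1}, …, B_k)`.

Elements of `G^o_k ⊆ GL(n, ℂ[z]/(z^k))` are encoded as their coefficient tuples
`g : Fin k → M(n,ℂ)` with `g 0 = 1`; multiplication is truncated convolution.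
The total preorders `≺_s` on the level-`s` eigenspace classes are encoded by rank
functions `ord s : Fin n → ℕ` whose fibers are exactly the classes.
-/

open Matrix BigOperators

noncomputable section

namespace HTLData

variable {n : ℕ} (D : HTLData n)

/-- The irregular polynomial attached to an index `a ∈ {1,…,n}`: the `q_j` of the block
of `a`.  Its degree-`s` coefficient is the diagonal entry of `B_s` at `a` (`s ≥ 2`). -/
def Qp (a : Fin n) : Polynomial ℂ := D.q (D.sigmaEquiv.symm a).1

/-- Two indices lie in the same simultaneous eigenspace `V_{⟨s,t⟩}` of
`(B_{s+1}, …, B_k)` iff the coefficients of their polynomials agree in all degrees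
`> s`. -/
def SameLevel (s : ℕ) (a b : Fin n) : Prop :=
  ∀ d : ℕ, s + 1 ≤ d → (D.Qp a).coeff d = (D.Qp b).coeff d

/-- `ord` encodes a compatible family of total orderings of the level-`s` eigenspace
classes, `s = 1, …, k−1`: the fibers of `ord s` are the classes, and the orderings are
compatible with the refinement maps `π_s`. -/
def IsOrderingFamily (k : ℕ) (ord : ℕ → Fin n → ℕ) : Prop :=
  (∀ s, 1 ≤ s → s ≤ k - 1 → ∀ a b, (ord s a = ord s b ↔ D.SameLevel s a b))
  ∧ (∀ s, 1 ≤ s → s + 1 ≤ k - 1 → ∀ a b, ord s a < ord s b → ord (s + 1) a ≤ ord (s + 1) b)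

end HTLData

/-- Truncated convolution: the product in `M(n, ℂ[z]/(z^k))` of coefficient tuples. -/
def truncMul {n k : ℕ} (u p : Fin k → Matrix (Fin n) (Fin n) ℂ) :
    Fin k → Matrix (Fin n) (Fin n) ℂ := fun s =>
  ∑ t : Fin k, if h : (t : ℕ) ≤ (s : ℕ) then
      u t * p ⟨(s : ℕ) - (t : ℕ), by omega⟩ else 0

/-- Membership in `U⁻`: constant term `1`, the coefficient of `z^s` lies in
`𝔲_{s+1}^−` (strictly lower triangular with respect to the level-`(s+1)` ordering,
`𝔲_k^− = 0`). -/
def UminusMem {n k : ℕ} (hk : 0 < k) (ord : ℕ → Fin n → ℕ)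
    (u : Fin k → Matrix (Fin n) (Fin n) ℂ) : Prop :=
  u ⟨0, hk⟩ = 1 ∧
  ∀ s : Fin k, 1 ≤ (s : ℕ) →
    (if (s : ℕ) + 1 = k then u s = 0
     else ∀ a b, ¬ (ord ((s : ℕ) + 1) a < ord ((s : ℕ) + 1) b) → u s b a = 0)

/-- Membership in `P⁺`: constant term `1`, the coefficient of `z^s` lies in
`𝔭_{s+1}^+` (block upper triangular with respect to the level-`(s+1)` ordering,
`𝔭_k^+ = M(n,ℂ)`). -/
def PplusMem {n k : ℕ} (hk : 0 < k) (ord : ℕ → Fin n → ℕ)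
    (p : Fin k → Matrix (Fin n) (Fin n) ℂ) : Prop :=
  p ⟨0, hk⟩ = 1 ∧
  ∀ s : Fin k, 1 ≤ (s : ℕ) → (s : ℕ) + 1 ≤ k - 1 →
    ∀ a b, ord ((s : ℕ) + 1) a < ord ((s : ℕ) + 1) b → p s b a = 0

end

/-! For `s ≥ 1` the coefficient of `z^s` in `u·p` is `u_s + p_s` plus products of
coefficients of order `< s`. Every matrix splits uniquely into an `𝔲_{s+1}^−` part (entries
strictly below the block diagonal of `≺_{s+1}`) and a `𝔭_{s+1}^+` part (the other entries),
so `u_s` and `p_s` are determined, recursively in `s`, by `g_s` and the lower coefficients. -/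

theorem Matrix.exists_add_eq_of_rel {m n R : Type*} [AddZeroClass R] (r : m → n → Prop)
    (M : Matrix m n R) :
    ∃ X Y : Matrix m n R, (∀ i j, ¬ r i j → X i j = 0) ∧ (∀ i j, r i j → Y i j = 0) ∧
      X + Y = M := by
  classical
  refine ⟨of fun i j => if r i j then M i j else 0, of fun i j => if r i j then 0 else M i j,
    fun i j h => by simp [h], fun i j h => by simp [h], ?_⟩
  ext i j
  by_cases h : r i j <;> simp [h]

theorem Matrix.eq_and_eq_of_add_eq_add_of_rel {m n R : Type*} [AddZeroClass R]
    {r : m → n → Prop} {X Y X' Y' : Matrix m n R}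
    (hX : ∀ i j, ¬ r i j → X i j = 0) (hY : ∀ i j, r i j → Y i j = 0)
    (hX' : ∀ i j, ¬ r i j → X' i j = 0) (hY' : ∀ i j, r i j → Y' i j = 0)
    (h : X + Y = X' + Y') : X = X' ∧ Y = Y' := by
  have hij : ∀ i j, X i j + Y i j = X' i j + Y' i j := fun i j => congrFun (congrFun h i) j
  constructor <;> ext i j <;> by_cases hr : r i j
  · simpa [hY i j hr, hY' i j hr] using hij i j
  · rw [hX i j hr, hX' i j hr]
  · rw [hY i j hr, hY' i j hr]
  · simpa [hX i j hr, hX' i j hr] using hij i j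

section GaussDecomposition

variable {n k : ℕ}

/-- The entries `(b, a)` of `𝔲_{s+1}^−`; the remaining entries are those of `𝔭_{s+1}^+`.
For `s + 1 = k` there are none, as `𝔲_k^− = 0` and `𝔭_k^+ = M(n,ℂ)`. -/
def UminusSupport (k : ℕ) (ord : ℕ → Fin n → ℕ) (s : ℕ) (b a : Fin n) : Prop :=
  s + 1 < k ∧ ord (s + 1) a < ord (s + 1) b

theorem uminusMem_iff {hk : 0 < k} {ord : ℕ → Fin n → ℕ}
    {u : Fin k → Matrix (Fin n) (Fin n) ℂ} :
    UminusMem hk ord u ↔ u ⟨0, hk⟩ = 1 ∧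
      ∀ s : Fin k, 1 ≤ (s : ℕ) → ∀ b a, ¬ UminusSupport k ord s b a → u s b a = 0 := by
  refine and_congr_right fun _ => forall₂_congr fun s _ => ?_
  split_ifs with hs
  · constructor
    · intro h b a _
      simp [h]
    · intro h
      ext b a
      exact h b a (by simp [UminusSupport, hs])
  · have hlt : (s : ℕ) + 1 < k := by omega
    simp only [UminusSupport, hlt, true_and]
    exact forall_comm

theorem pplusMem_iff {hk : 0 < k} {ord : ℕ → Fin n → ℕ}
    {p : Fin k → Matrix (Fin n) (Fin n) ℂ} :
    PplusMem hk ord p ↔ p ⟨0, hk⟩ = 1 ∧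
      ∀ s : Fin k, 1 ≤ (s : ℕ) → ∀ b a, UminusSupport k ord s b a → p s b a = 0 := by
  refine and_congr_right fun _ => forall₂_congr fun s _ => ?_
  simp only [UminusSupport]
  constructor
  · exact fun h b a hab => h (by omega) a b hab.2
  · exact fun h _ a b hab => h b a ⟨by omega, hab⟩

theorem truncMul_zero (hk : 0 < k) (u p : Fin k → Matrix (Fin n) (Fin n) ℂ) :
    truncMul u p ⟨0, hk⟩ = u ⟨0, hk⟩ * p ⟨0, hk⟩ := by
  rw [truncMul, Finset.sum_eq_single ⟨0, hk⟩ (fun t _ ht => dif_neg fun h => ht (Fin.ext (by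
    simpa using h))) (by simp)]
  rfl

def lowerConv (u p : Fin k → Matrix (Fin n) (Fin n) ℂ) (s : Fin k) : Matrix (Fin n) (Fin n) ℂ :=
  ∑ t ∈ Finset.univ.filter (fun t : Fin k => 0 < (t : ℕ) ∧ t < s),
    u t * p ⟨(s : ℕ) - t, lt_of_le_of_lt (Nat.sub_le _ _) s.isLt⟩

theorem truncMul_eq_add_lowerConv (hk : 0 < k) (u p : Fin k → Matrix (Fin n) (Fin n) ℂ)
    {s : Fin k} (hs : 1 ≤ (s : ℕ)) :
    truncMul u p s = u s * p ⟨0, hk⟩ + u ⟨0, hk⟩ * p s + lowerConv u p s := by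
  have hterm : ∀ t : Fin k, (if h : (t : ℕ) ≤ s then u t * p ⟨s - t, by omega⟩ else 0) =
      (if t = s then u s * p ⟨0, hk⟩ else 0) + (if t = ⟨0, hk⟩ then u ⟨0, hk⟩ * p s else 0) +
      (if 0 < (t : ℕ) ∧ t < s then u t * p ⟨(s : ℕ) - t, lt_of_le_of_lt (Nat.sub_le _ _) s.isLt⟩
        else 0) := by
    intro t
    rcases eq_or_ne t s with rfl | hts
    · have h0 : t ≠ ⟨0, hk⟩ := fun h => by simp [h] at hs
      simp [h0]
    rcases eq_or_ne t ⟨0, hk⟩ with rfl | ht0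
    · simp [hts]
    · have ht0' : (t : ℕ) ≠ 0 := fun h => ht0 (Fin.ext h)
      have hts' : (t : ℕ) ≠ s := fun h => hts (Fin.ext h)
      simp only [hts, ht0, if_false, zero_add, Fin.lt_def]
      split_ifs <;> first | rfl | omega
  simp only [truncMul, hterm, Finset.sum_add_distrib, Finset.sum_ite_eq', Finset.mem_univ,
    if_true, lowerConv, Finset.sum_filter]

theorem truncMul_congr {u p u' p' : Fin k → Matrix (Fin n) (Fin n) ℂ} {s : Fin k}
    (h : ∀ t ≤ s, u t = u' t ∧ p t = p' t) : truncMul u p s = truncMul u' p' s := by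
  refine Finset.sum_congr rfl fun t _ => ?_
  split_ifs with hts
  · rw [(h t hts).1, (h ⟨(s : ℕ) - t, _⟩ (by rw [Fin.le_def]; dsimp only; omega)).2]
  · rfl

theorem lowerConv_congr {u p u' p' : Fin k → Matrix (Fin n) (Fin n) ℂ} {s : Fin k}
    (h : ∀ t < s, u t = u' t ∧ p t = p' t) : lowerConv u p s = lowerConv u' p' s := by
  refine Finset.sum_congr rfl fun t ht => ?_
  rw [Finset.mem_filter] at ht
  rw [(h t ht.2.2).1, (h ⟨(s : ℕ) - t, _⟩ (by rw [Fin.lt_def]; dsimp only; omega)).2]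

section

variable {hk : 0 < k} {ord : ℕ → Fin n → ℕ}

theorem uminusMem_single : UminusMem hk ord (Pi.single ⟨0, hk⟩ 1) := by
  refine uminusMem_iff.2 ⟨Pi.single_eq_same _ _, fun s hs b a _ => ?_⟩
  rw [Pi.single_eq_of_ne (fun h => by simp [h] at hs), Matrix.zero_apply]

theorem pplusMem_single : PplusMem hk ord (Pi.single ⟨0, hk⟩ 1) := by
  refine pplusMem_iff.2 ⟨Pi.single_eq_same _ _, fun s hs b a _ => ?_⟩
  rw [Pi.single_eq_of_ne (fun h => by simp [h] at hs), Matrix.zero_apply]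

theorem UminusMem.update {u : Fin k → Matrix (Fin n) (Fin n) ℂ} (hu : UminusMem hk ord u)
    {s : Fin k} (hs : 1 ≤ (s : ℕ)) {X : Matrix (Fin n) (Fin n) ℂ}
    (hX : ∀ b a, ¬ UminusSupport k ord s b a → X b a = 0) :
    UminusMem hk ord (Function.update u s X) := by
  have hs0 : (⟨0, hk⟩ : Fin k) ≠ s := fun h => by simp [← h] at hs
  rw [uminusMem_iff] at hu ⊢
  refine ⟨by rw [Function.update_of_ne hs0, hu.1], fun t ht => ?_⟩
  rcases eq_or_ne t s with rfl | hts
  · simpa using hX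
  · simpa [Function.update_of_ne hts] using hu.2 t ht

theorem PplusMem.update {p : Fin k → Matrix (Fin n) (Fin n) ℂ} (hp : PplusMem hk ord p)
    {s : Fin k} (hs : 1 ≤ (s : ℕ)) {Y : Matrix (Fin n) (Fin n) ℂ}
    (hY : ∀ b a, UminusSupport k ord s b a → Y b a = 0) :
    PplusMem hk ord (Function.update p s Y) := by
  have hs0 : (⟨0, hk⟩ : Fin k) ≠ s := fun h => by simp [← h] at hs
  rw [pplusMem_iff] at hp ⊢
  refine ⟨by rw [Function.update_of_ne hs0, hp.1], fun t ht => ?_⟩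
  rcases eq_or_ne t s with rfl | hts
  · simpa using hY
  · simpa [Function.update_of_ne hts] using hp.2 t ht

theorem exists_uminusMem_pplusMem_truncMul_eq_of_le (g : Fin k → Matrix (Fin n) (Fin n) ℂ)
    (hg : g ⟨0, hk⟩ = 1) (j : ℕ) :
    ∃ u p, UminusMem hk ord u ∧ PplusMem hk ord p ∧
      ∀ s : Fin k, (s : ℕ) ≤ j → truncMul u p s = g s := by
  induction j with
  | zero =>
    refine ⟨_, _, uminusMem_single, pplusMem_single, fun s hs => ?_⟩
    obtain rfl : s = ⟨0, hk⟩ := Fin.ext (by simpa using hs)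
    rw [truncMul_zero, hg, Pi.single_eq_same, one_mul]
  | succ j ih =>
    obtain ⟨u, p, hu, hp, hup⟩ := ih
    by_cases hj : k ≤ j + 1
    · exact ⟨u, p, hu, hp, fun s hs => hup s (by omega)⟩
    set s : Fin k := ⟨j + 1, by omega⟩
    obtain ⟨X, Y, hX, hY, hXY⟩ := Matrix.exists_add_eq_of_rel (UminusSupport k ord s)
      (g s - lowerConv u p s)
    have hs : 1 ≤ (s : ℕ) := by simp [s]
    have hu' := hu.update hs hX
    have hp' := hp.update hs hY
    have hagree : ∀ t : Fin k, t ≠ s →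
        Function.update u s X t = u t ∧ Function.update p s Y t = p t :=
      fun t ht => ⟨Function.update_of_ne ht _ _, Function.update_of_ne ht _ _⟩
    refine ⟨_, _, hu', hp', fun t ht => ?_⟩
    rcases eq_or_ne t s with rfl | hts
    · rw [truncMul_eq_add_lowerConv hk _ _ hs, hu'.1, hp'.1, mul_one, one_mul,
        lowerConv_congr (fun t ht => hagree t ht.ne), Function.update_self, Function.update_self,
        hXY, sub_add_cancel]
    · have hts' : t < s := lt_of_le_of_ne (Fin.le_def.2 ht) hts
      rw [truncMul_congr fun r hr => hagree r (hr.trans_lt hts').ne,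
        hup t (Nat.lt_succ_iff.1 hts')]

theorem eq_of_truncMul_eq_truncMul {u p u' p' : Fin k → Matrix (Fin n) (Fin n) ℂ}
    (hu : UminusMem hk ord u) (hp : PplusMem hk ord p)
    (hu' : UminusMem hk ord u') (hp' : PplusMem hk ord p')
    (h : truncMul u p = truncMul u' p') : u = u' ∧ p = p' := by
  suffices ∀ s, u s = u' s ∧ p s = p' s from
    ⟨funext fun s => (this s).1, funext fun s => (this s).2⟩
  intro s
  induction s using WellFoundedLT.induction with | ind s ih => ?_
  rcases Nat.eq_zero_or_pos s with hs | hs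
  · obtain rfl : s = ⟨0, hk⟩ := Fin.ext hs
    exact ⟨hu.1.trans hu'.1.symm, hp.1.trans hp'.1.symm⟩
  have hsum := congrFun h s
  rw [truncMul_eq_add_lowerConv hk _ _ hs, truncMul_eq_add_lowerConv hk _ _ hs,
    lowerConv_congr ih, hu.1, hp.1, hu'.1, hp'.1, mul_one, mul_one, one_mul, one_mul,
    add_left_inj] at hsum
  rw [uminusMem_iff] at hu hu'
  rw [pplusMem_iff] at hp hp'
  exact Matrix.eq_and_eq_of_add_eq_add_of_rel (hu.2 s hs) (hp.2 s hs) (hu'.2 s hs) (hp'.2 s hs)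
    hsum

end

end GaussDecomposition

theorem gauss_decomposition_of_Go_general (n k : ℕ) (hk : 0 < k)
    (ord : ℕ → Fin n → ℕ)
    (g : Fin k → Matrix (Fin n) (Fin n) ℂ) (hg : g ⟨0, hk⟩ = 1) :
    ∃! up : (Fin k → Matrix (Fin n) (Fin n) ℂ) × (Fin k → Matrix (Fin n) (Fin n) ℂ),
      UminusMem hk ord up.1 ∧ PplusMem hk ord up.2 ∧ truncMul up.1 up.2 = g := by
  obtain ⟨u, p, hu, hp, hup⟩ := exists_uminusMem_pplusMem_truncMul_eq_of_le g hg (k - 1)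
  have hgup : truncMul u p = g := funext fun s => hup s (by omega)
  refine ⟨(u, p), ⟨hu, hp, hgup⟩, ?_⟩
  rintro ⟨u', p'⟩ ⟨hu', hp', hg'⟩
  obtain ⟨rfl, rfl⟩ := eq_of_truncMul_eq_truncMul hu' hp' hu hp (hg'.trans hgup.symm)
  rfl

/-- STATEMENT 7: every `g ∈ G^o_k` factors uniquely as `g = u·p` with `u ∈ U⁻`,
`p ∈ P⁺`. -/
theorem gauss_decomposition_of_Go (n k : ℕ) (hk : 0 < k) (D : HTLData n)
    (hdeg : ∀ j, (D.q j).natDegree ≤ k)  -- `k` bounds the pole order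
    (hpole : k = 1 ∨ ∃ j, (D.q j).natDegree = k)  -- and `k` is the pole order
    (ord : ℕ → Fin n → ℕ) (hordfam : D.IsOrderingFamily k ord)
    (g : Fin k → Matrix (Fin n) (Fin n) ℂ) (hg : g ⟨0, hk⟩ = 1) :
    ∃! up : (Fin k → Matrix (Fin n) (Fin n) ℂ) × (Fin k → Matrix (Fin n) (Fin n) ℂ),
      UminusMem hk ord up.1 ∧ PplusMem hk ord up.2 ∧ truncMul up.1 up.2 = g :=
  gauss_decomposition_of_Go_general n k hk ord g hg
end

section
/- Let B = (B^{(0)},…,B^{(p)}), Q, α, λ, L be as in the context. Then there exists v = (v_1,…,v_p) ∈ ℂ^p such that, setting v₀ := −Σ_{i=1}^p v_i and v̄ ∈ ℂ^{Q₀} by v̄_{[i,j]} := v_i for i ∈ I_irr\{0}, v̄_{[0,j]} := v₀ + Σ_{k∈I_reg} v_k, v̄_{[i,j,k]} := 0, one has: M_{λ+v̄}(Q,α)^dif equals the quotient by G of the set of x ∈ μ⁻¹(λ+v̄) that are irreducible (not merely L-irreducible) and satisfy the determinant conditions; in particular M_{λ+v̄}(Q,α)^dif is contained in M^reg_{λ+v̄}(Q,α)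 := μ⁻¹(λ+v̄)^irr/G. -/
open Matrix BigOperators

noncomputable section

/-- A Laurent series is a principal part (class representative in `ℂ((z))/ℂ[[z]]`). -/
def IsPrincipal (f : LaurentSeries ℂ) : Prop := ∀ k : ℤ, 0 ≤ k → f.coeff k = 0

/-- `GL(n, ℂ)`. -/
abbrev GLc (n : ℕ) := (Matrix (Fin n) (Fin n) ℂ)ˣ

/-- The inclusion `GL(n, ℂ) → GL(n, ℂ((z)))`. -/
def glC {n : ℕ} : GLc n →* (Matrix (Fin n) (Fin n) (LaurentSeries ℂ))ˣ :=
  Units.map ((HahnSeries.C : ℂ →+* LaurentSeries ℂ).mapMatrix).toMonoidHom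

/-- Conjugation of a matrix of Laurent series by `X ∈ GL(n, ℂ[[z]])`. -/
def conjPS {n : ℕ} (X : GLps n) (B : Matrix (Fin n) (Fin n) (LaurentSeries ℂ)) :
    Matrix (Fin n) (Fin n) (LaurentSeries ℂ) :=
  (glMap X).val * B * ((glMap X)⁻¹).val

/-- Conjugation by a constant invertible matrix. -/
def conjC {n : ℕ} (g : GLc n) (B : Matrix (Fin n) (Fin n) (LaurentSeries ℂ)) :
    Matrix (Fin n) (Fin n) (LaurentSeries ℂ) :=
  (glC g).val * B * ((glC g)⁻¹).val

/-- The matrix of `z^k`-coefficients of a matrix of Laurent series. -/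
def coeffM {n : ℕ} (M : Matrix (Fin n) (Fin n) (LaurentSeries ℂ)) (k : ℤ) :
    Matrix (Fin n) (Fin n) ℂ := fun a b => (M a b).coeff k

/-! ### Finite quivers and representations of double quivers -/

/-- A finite quiver. -/
structure FinQuiver where
  V : Type
  E : Type
  [fintypeV : Fintype V]
  [decEqV : DecidableEq V]
  [fintypeE : Fintype E]
  [decEqE : DecidableEq E]
  src : E → V
  tgt : E → V

attribute [instance] FinQuiver.fintypeV FinQuiver.decEqV FinQuiver.fintypeE FinQuiver.decEqE

namespace FinQuiver

variable (Q : FinQuiver) (α : Q.V → ℕ)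

/-- The representation space of the double quiver `Q̄` with dimension vector `α`. -/
abbrev Rep :=
  ∀ e : Q.E, Matrix (Fin (α (Q.tgt e))) (Fin (α (Q.src e))) ℂ ×
    Matrix (Fin (α (Q.src e))) (Fin (α (Q.tgt e))) ℂ

/-- The group `G = ∏_{a ∈ Q₀} GL(α_a, ℂ)`. -/
abbrev GGroup := ∀ a : Q.V, (Matrix (Fin (α a)) (Fin (α a)) ℂ)ˣ

variable {Q α}

/-- The action of `G` on `Rep(Q̄,α)`. -/
def act (g : Q.GGroup α) (x : Q.Rep α) : Q.Rep α := fun e =>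
  ((g (Q.tgt e)).val * (x e).1 * ((g (Q.src e))⁻¹).val,
   (g (Q.src e)).val * (x e).2 * ((g (Q.tgt e))⁻¹).val)

/-- The moment map `μ`. -/
def mu (x : Q.Rep α) (a : Q.V) : Matrix (Fin (α a)) (Fin (α a)) ℂ :=
  (∑ e : Q.E, if h : Q.tgt e = a then
      (Matrix.reindex (finCongr (congrArg α h)) (finCongr (congrArg α h))
        ((x e).1 * (x e).2)) else 0)
  - ∑ e : Q.E, if h : Q.src e = a then
      (Matrix.reindex (finCongr (congrArg α h)) (finCongr (congrArg α h))
        ((x e).2 * (x e).1)) else 0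

/-- A collection of subspaces invariant under all the components of `x`. -/
def InvFamily (x : Q.Rep α) (W : ∀ a : Q.V, Submodule ℂ (Fin (α a) → ℂ)) : Prop :=
  ∀ e : Q.E, (∀ v ∈ W (Q.src e), (x e).1.mulVec v ∈ W (Q.tgt e)) ∧
             (∀ v ∈ W (Q.tgt e), (x e).2.mulVec v ∈ W (Q.src e))

/-- `x` is an irreducible representation of the double quiver. -/
def Irred (x : Q.Rep α) : Prop :=
  ∀ W : ∀ a : Q.V, Submodule ℂ (Fin (α a) → ℂ),
    InvFamily x W → (∀ a, W a = ⊥) ∨ (∀ a, W a = ⊤)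

end FinQuiver

/-! ### The data of a collection of HTL normal forms -/

/-- A collection `B = (B^{(0)}, …, B^{(p)})` of unramified HTL normal forms of size `n`,
`B^{(i)} = diag(q^{(i)}_j(z⁻¹)I_{n^{(i)}_j} + R^{(i)}_j z⁻¹)_{j=1,…,m^{(i)}}`,
together with eigenvalue data `ξ^{[i,j]}_1, …, ξ^{[i,j]}_{e_{[i,j]}}` with
`∏_k (R^{(i)}_j − ξ^{[i,j]}_k) = 0`. -/
structure ConnData where
  n : ℕ
  hn : 0 < n
  p : ℕ
  m : Fin (p+1) → ℕ
  hm : ∀ i, 0 < m i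
  nb : (i : Fin (p+1)) → Fin (m i) → ℕ
  hnb : ∀ i j, 0 < nb i j
  hsum : ∀ i, ∑ j, nb i j = n
  q : (i : Fin (p+1)) → Fin (m i) → Polynomial ℂ
  hq0 : ∀ i j, (q i j).coeff 0 = 0
  hq1 : ∀ i j, (q i j).coeff 1 = 0
  hqd : ∀ i (j j' : Fin (m i)), j ≠ j' → q i j ≠ q i j'
  hreg : ∀ i, i ≠ 0 → m i = 1 → ∀ j, q i j = 0
  R : (i : Fin (p+1)) → (j : Fin (m i)) → Matrix (Fin (nb i j)) (Fin (nb i j)) ℂ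
  e : (i : Fin (p+1)) → Fin (m i) → ℕ
  he : ∀ i j, 0 < e i j
  xi : (i : Fin (p+1)) → (j : Fin (m i)) → Fin (e i j) → ℂ
  hxi : ∀ i j,
    (List.ofFn fun k => R i j - xi i j k • (1 : Matrix (Fin (nb i j)) (Fin (nb i j)) ℂ)).prod = 0

namespace ConnData

variable (D : ConnData)

/-- `i ∈ I_irr`. -/
def isIrr (i : Fin (D.p+1)) : Prop := 1 < D.m i ∨ i = 0

instance : DecidablePred D.isIrr := fun _ => inferInstanceAs (Decidable (_ ∨ _))

/-- The set of indices of irregular type. -/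
abbrev IrrIdx := {i : Fin (D.p+1) // D.isIrr i}

/-- The set of indices of irregular type other than `0`. -/
abbrev IrrNz := {i : Fin (D.p+1) // D.isIrr i ∧ i ≠ 0}

/-- The unique block index at a point. -/
def j1 (i : Fin (D.p+1)) : Fin (D.m i) := ⟨0, D.hm i⟩

/-- `d_i(j,j') = deg(q^{(i)}_j − q^{(i)}_{j'}) − 2`. -/
def dd (i : Fin (D.p+1)) (j j' : Fin (D.m i)) : ℕ := ((D.q i j) - (D.q i j')).natDegree - 2

/-- The vertex set of the quiver: mid vertices `[i,j]` (for `i ∈ I_irr`) and leg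
vertices `[i,j,k]`, `1 ≤ k ≤ e_{[i,j]}−1`. -/
abbrev Vq :=
  (Σ i : D.IrrIdx, Fin (D.m i.1)) ⊕ (Σ i : Fin (D.p+1), Σ j : Fin (D.m i), Fin (D.e i j - 1))

/-- The vertex `[i,j]`, `i ∈ I_irr`. -/
def vmid (i : D.IrrIdx) (j : Fin (D.m i.1)) : D.Vq := Sum.inl ⟨i, j⟩

/-- `0 ∈ I_irr`. -/
def irr0 : D.IrrIdx := ⟨0, Or.inr rfl⟩

/-- The vertex `[0,j]`. -/
def vmid0 (j : Fin (D.m 0)) : D.Vq := Sum.inl ⟨D.irr0, j⟩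

/-- The leg vertex `[i,j,k+1]` (`k` is 0-based). -/
def vleg (i : Fin (D.p+1)) (j : Fin (D.m i)) (k : Fin (D.e i j - 1)) : D.Vq :=
  Sum.inr ⟨i, j, k⟩

/-- Arrows `[0,j] → [i,j']`, `i ∈ I_irr \ {0}`. -/
abbrev Arr1 := Fin (D.m 0) × (Σ i : D.IrrNz, Fin (D.m i.1))
/-- `d_i(j,j')` arrows `[i,j] → [i,j']` for `i ∈ I_irr`, `j < j'`. -/
abbrev Arr2 := Σ i : D.IrrIdx, Σ jj : {x : Fin (D.m i.1) × Fin (D.m i.1) // x.1 < x.2},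
  Fin (D.dd i.1 jj.1.1 jj.1.2)
/-- Leg arrows `[i,j,k] → [i,j,k−1]`, `k ≥ 2`. -/
abbrev Arr3 := Σ i : Fin (D.p+1), Σ j : Fin (D.m i), Fin (D.e i j - 2)
/-- Arrows `[i,j,1] → [i,j]`, `i ∈ I_irr`. -/
abbrev Arr4 := Σ i : D.IrrIdx, {j : Fin (D.m i.1) // 2 ≤ D.e i.1 j}
/-- Arrows `[i,1,1] → [0,j]`, `i ∈ I_reg`. -/
abbrev Arr5 := {i : Fin (D.p+1) // ¬ D.isIrr i ∧ 2 ≤ D.e i (D.j1 i)} × Fin (D.m 0)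

/-- The arrow set of the quiver. -/
abbrev Arr := D.Arr1 ⊕ D.Arr2 ⊕ D.Arr3 ⊕ D.Arr4 ⊕ D.Arr5

/-- Sources of arrows. -/
def qsrc : D.Arr → D.Vq
  | .inl (j, ⟨_, _⟩) => D.vmid0 j
  | .inr (.inl ⟨i, jj, _⟩) => D.vmid i jj.1.1
  | .inr (.inr (.inl ⟨i, j, t⟩)) => D.vleg i j ⟨t.1 + 1, by have := t.isLt; omega⟩
  | .inr (.inr (.inr (.inl ⟨i, j⟩))) => D.vleg i.1 j.1 ⟨0, by have := j.2; omega⟩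
  | .inr (.inr (.inr (.inr (i, _)))) => D.vleg i.1 (D.j1 i.1) ⟨0, by have := i.2.2; omega⟩

/-- Targets of arrows. -/
def qtgt : D.Arr → D.Vq
  | .inl (_, ⟨i, j'⟩) => D.vmid ⟨i.1, i.2.1⟩ j'
  | .inr (.inl ⟨i, jj, _⟩) => D.vmid i jj.1.2
  | .inr (.inr (.inl ⟨i, j, t⟩)) => D.vleg i j ⟨t.1, by have := t.isLt; omega⟩
  | .inr (.inr (.inr (.inl ⟨i, j⟩))) => D.vmid i j.1
  | .inr (.inr (.inr (.inr (_, j)))) => D.vmid0 j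

/-- The quiver `Q` associated with `B`. -/
def quiv : FinQuiver := FinQuiver.mk (V := D.Vq) (E := D.Arr) D.qsrc D.qtgt

/-- The dimension vector `α`. -/
def alphaV : D.Vq → ℕ
  | .inl ⟨i, j⟩ => D.nb i.1 j
  | .inr ⟨i, j, k⟩ =>
      ((List.ofFn fun l : Fin (k.1 + 1) =>
          D.R i j - D.xi i j ⟨l.1, by have := l.isLt; have := k.isLt; omega⟩ •
            (1 : Matrix (Fin (D.nb i j)) (Fin (D.nb i j)) ℂ)).prod).rank

/-- The dimension vector `α` as an integral vector. -/
def alphaZ : D.Vq → ℤ := fun a => (D.alphaV a : ℤ)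

/-- `Σ_{i ∈ I_reg} ξ^{[i,1]}_1`. -/
def regSumXi : ℂ :=
  ∑ i : Fin (D.p+1), if D.isIrr i then 0 else D.xi i (D.j1 i) ⟨0, D.he _ _⟩

/-- The parameter `λ`. -/
def lamV : D.Vq → ℂ
  | .inl ⟨⟨i, _⟩, j⟩ =>
      if h : i = 0 then - D.xi 0 (h ▸ j) ⟨0, D.he _ _⟩ - D.regSumXi
      else - D.xi i j ⟨0, D.he _ _⟩
  | .inr ⟨i, j, k⟩ =>
      D.xi i j ⟨k.1, by have := k.isLt; omega⟩ - D.xi i j ⟨k.1 + 1, by have := k.isLt; omega⟩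

/-- The lattice `L ⊆ ℤ^{Q₀}`. -/
def latt : Set (D.Vq → ℤ) :=
  {β | ∀ i : D.IrrNz,
    (∑ j : Fin (D.m 0), β (D.vmid0 j)) = ∑ j : Fin (D.m i.1), β (D.vmid ⟨i.1, i.2.1⟩ j)}

/-- `L`-irreducibility of a representation: no nontrivial proper invariant collection
of subspaces whose dimension vector lies in `L`. -/
def LIrred {αd : D.Vq → ℕ} (x : D.quiv.Rep αd) : Prop :=
  ∀ W : ∀ a : D.Vq, Submodule ℂ (Fin (αd a) → ℂ),
    FinQuiver.InvFamily x W →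
    (fun a => (Module.finrank ℂ (W a) : ℤ)) ∈ D.latt →
    (∀ a, W a = ⊥) ∨ (∀ a, W a = ⊤)

/-- The block matrix formed by the components of `x` along the arrows `[0,j] → [i,j']`
for a fixed `i ∈ I_irr \ {0}`. -/
def detMat {αd : D.Vq → ℕ} (x : D.quiv.Rep αd) (i : D.IrrNz) :
    Matrix (Σ j' : Fin (D.m i.1), Fin (αd (D.vmid ⟨i.1, i.2.1⟩ j')))
      (Σ j : Fin (D.m 0), Fin (αd (D.vmid0 j))) ℂ :=
  fun rc cc => (x (Sum.inl (cc.1, ⟨i, rc.1⟩))).1 rc.2 cc.2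

/-- The determinant conditions: the block matrices along the arrows `[0,j] → [i,j']`
are invertible for all `i ∈ I_irr \ {0}`. -/
def DetCond {αd : D.Vq → ℕ} (x : D.quiv.Rep αd) : Prop :=
  ∀ i : D.IrrNz, Function.Bijective (Matrix.mulVecLin (D.detMat x i))

/-- The set underlying `M_λ(Q,α)^dif`. -/
def MdifSub (lam : D.Vq → ℂ) (αd : D.Vq → ℕ) :=
  {x : D.quiv.Rep αd //
    (∀ a, FinQuiver.mu x a = lam a • (1 : Matrix (Fin (αd a)) (Fin (αd a)) ℂ)) ∧
    D.LIrred x ∧ D.DetCond x}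

/-- `M_λ(Q,α)^dif`: the quotient of the `L`-irreducible locus (with the determinant
conditions) of `μ⁻¹(λ)` by `G`. -/
def Mdif (lam : D.Vq → ℂ) (αd : D.Vq → ℕ) :=
  Quot (fun x y : D.MdifSub lam αd => ∃ g : D.quiv.GGroup αd, FinQuiver.act g x.1 = y.1)

/-- Identification of the disjoint union of the blocks of `B^{(i)}` with `Fin n`. -/
def sigmaEquiv (i : Fin (D.p+1)) : (Σ j : Fin (D.m i), Fin (D.nb i j)) ≃ Fin D.n :=
  Fintype.equivFinOfCardEq (by simpa using D.hsum i)

/-- The matrix of the HTL normal form `B^{(i)}`. -/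
def BmatAt (i : Fin (D.p+1)) : Matrix (Fin D.n) (Fin D.n) (LaurentSeries ℂ) :=
  Matrix.reindex (D.sigmaEquiv i) (D.sigmaEquiv i)
    (Matrix.blockDiagonal' fun j =>
      (fun a b => (if a = b then polyZinv (D.q i j) else 0) +
        HahnSeries.single (-1 : ℤ) (D.R i j a b)))

/-- Membership in the moduli space data: a tuple of principal parts, lying in the
truncated orbits of the `B^{(i)}`, with vanishing total residue, which is
irreducible. -/
def MBMem (A : Fin (D.p+1) → Matrix (Fin D.n) (Fin D.n) (LaurentSeries ℂ)) : Prop :=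
  (∀ i a b, IsPrincipal (A i a b)) ∧
  (∀ i, ∃ X : GLps D.n, ∀ a b, Tame ((A i - conjPS X (D.BmatAt i)) a b)) ∧
  (∑ i, coeffM (A i) (-1)) = 0 ∧
  (∀ W : Submodule ℂ (Fin D.n → ℂ),
    (∀ i (k : ℤ), ∀ v ∈ W, (coeffM (A i) k).mulVec v ∈ W) → W = ⊥ ∨ W = ⊤)

/-- The set underlying the moduli space `M(B)`. -/
def MBSub := {A : Fin (D.p+1) → Matrix (Fin D.n) (Fin D.n) (LaurentSeries ℂ) // D.MBMem A}

/-- The moduli space `M(B)` of stable meromorphic connections on trivial bundles with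
formal types `B`: the quotient by simultaneous `GL(n,ℂ)`-conjugation. -/
def MB := Quot (fun A A' : D.MBSub => ∃ g : GLc D.n, ∀ i, conjC g (A.1 i) = A'.1 i)

/-- The shift `v̄ ∈ ℂ^{Q₀}` attached to `v = (v_1,…,v_p) ∈ ℂ^p`:
`v̄_{[i,j]} = v_i` for `i ∈ I_irr \ {0}`, `v̄_{[0,j]} = v_0 + Σ_{k ∈ I_reg} v_k`
(where `v_0 := −Σ_{i=1}^p v_i`), and `v̄ = 0` on leg vertices. -/
def vbar (v : Fin D.p → ℂ) : D.Vq → ℂ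
  | .inl ⟨⟨i, _⟩, _⟩ =>
      if h : i = 0 then
        (- ∑ i' : Fin D.p, v i') + ∑ i' : Fin D.p, (if ¬ D.isIrr i'.succ then v i' else 0)
      else v (i.pred h)
  | .inr _ => 0

end ConnData

end

/-!
If `μ(x) = c` is scalar and `W ⊆ x` is a subrepresentation, then `Σ_a c_a dim W_a = 0`: taking
traces of `μ(x)` against projections onto the `W_a`, every arrow contributes
`tr(x_e x_e^* P_t) − tr(x_e^* x_e P_s) = 0` because `x_e` and `x_e^*` preserve `W`. So `x` can
only fail to be irreducible through dimension vectors `β ≤ α` with `(λ + v̄) · β = 0`. For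
`β ∉ L` the functional `v ↦ v̄ · β` is nonzero, so a generic `v` avoids these finitely many
affine hyperplanes, and then every subrepresentation of `x` has dimension vector in `L`.
-/

section Projection

variable {K ι : Type*} [Field K] [Fintype ι] [DecidableEq ι]

theorem Submodule.exists_matrix_proj_trace_eq_finrank (W : Submodule K (ι → K)) :
    ∃ P : Matrix ι ι K, (∀ v, P *ᵥ v ∈ W) ∧ (∀ v ∈ W, P *ᵥ v = v) ∧
      P.trace = Module.finrank K W := by
  obtain ⟨W', hW'⟩ := W.exists_isCompl
  set f := W.subtype ∘ₗ W.projectionOnto W' hW'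
  have hf : ∀ v, LinearMap.toMatrix' f *ᵥ v = f v := fun v => by
    rw [← Matrix.toLin'_apply, Matrix.toLin'_toMatrix']
  refine ⟨LinearMap.toMatrix' f, fun v => hf v ▸ (W.projectionOnto W' hW' v).2,
    fun v hv => by simp [hf, f, Submodule.projectionOnto_apply_left hW' ⟨v, hv⟩], ?_⟩
  rw [← LinearMap.toMatrix_eq_toMatrix', ← LinearMap.trace_eq_matrix_trace,
    LinearMap.trace_comp_comm', Submodule.projectionOnto_comp_subtype, LinearMap.trace_id]

variable {κ : Type*} [Fintype κ]

theorem Matrix.mul_mul_eq_of_mapsTo {A : Matrix κ ι K} {P : Matrix ι ι K} {P' : Matrix κ κ K}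
    {W : Submodule K (ι → K)} {W' : Submodule K (κ → K)} (hP : ∀ v, P *ᵥ v ∈ W)
    (hP' : ∀ v ∈ W', P' *ᵥ v = v) (hA : ∀ v ∈ W, A *ᵥ v ∈ W') : P' * (A * P) = A * P :=
  Matrix.ext_of_mulVec_single fun i => by
    rw [← Matrix.mulVec_mulVec, hP' _ (by rw [← Matrix.mulVec_mulVec]; exact hA _ (hP _))]

theorem Matrix.trace_mul_mul_proj_comm [DecidableEq κ] {A : Matrix κ ι K} {B : Matrix ι κ K}
    {P : Matrix ι ι K} {P' : Matrix κ κ K} {W : Submodule K (ι → K)} {W' : Submodule K (κ → K)}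
    (hP : ∀ v, P *ᵥ v ∈ W) (hPW : ∀ v ∈ W, P *ᵥ v = v)
    (hP' : ∀ v, P' *ᵥ v ∈ W') (hPW' : ∀ v ∈ W', P' *ᵥ v = v)
    (hA : ∀ v ∈ W, A *ᵥ v ∈ W') (hB : ∀ v ∈ W', B *ᵥ v ∈ W) :
    (A * B * P').trace = (B * A * P).trace := by
  calc (A * B * P').trace = (A * P * (B * P')).trace := by
        rw [Matrix.mul_assoc A P, Matrix.mul_mul_eq_of_mapsTo hP' hPW hB, Matrix.mul_assoc]
    _ = (B * P' * (A * P)).trace := Matrix.trace_mul_comm _ _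
    _ = (B * A * P).trace := by
        rw [Matrix.mul_assoc B P', Matrix.mul_mul_eq_of_mapsTo hP hPW' hA, Matrix.mul_assoc]

end Projection

theorem Matrix.sum_trace_dite_reindex_mul {V K : Type*} [Fintype V] [DecidableEq V] [Field K]
    (α : V → ℕ) (b : V) (M : Matrix (Fin (α b)) (Fin (α b)) K)
    (P : ∀ a, Matrix (Fin (α a)) (Fin (α a)) K) :
    ∑ a, ((if h : b = a then reindex (finCongr (congrArg α h)) (finCongr (congrArg α h)) M
      else 0) * P a).trace = (M * P b).trace := by
  rw [Fintype.sum_eq_single b fun a ha => by rw [dif_neg (Ne.symm ha), zero_mul, trace_zero]]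
  simp

namespace FinQuiver

variable {Q : FinQuiver} {α : Q.V → ℕ}

theorem sum_trace_mu_mul (x : Q.Rep α) (P : ∀ a, Matrix (Fin (α a)) (Fin (α a)) ℂ) :
    ∑ a, (mu x a * P a).trace =
      ∑ e, (((x e).1 * (x e).2 * P (Q.tgt e)).trace - ((x e).2 * (x e).1 * P (Q.src e)).trace) := by
  simp only [mu, Matrix.sub_mul, Matrix.trace_sub, Finset.sum_mul, Matrix.trace_sum,
    Finset.sum_sub_distrib]
  rw [Finset.sum_comm (γ := Q.V), Finset.sum_comm (γ := Q.V)]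
  simp only [Matrix.sum_trace_dite_reindex_mul]

theorem sum_mul_finrank_eq_zero_of_mu_eq_smul (x : Q.Rep α) (c : Q.V → ℂ)
    (hmu : ∀ a, mu x a = c a • (1 : Matrix (Fin (α a)) (Fin (α a)) ℂ))
    {W : ∀ a, Submodule ℂ (Fin (α a) → ℂ)} (hW : InvFamily x W) :
    ∑ a, c a * Module.finrank ℂ (W a) = 0 := by
  choose P hP hPW htr using fun a => (W a).exists_matrix_proj_trace_eq_finrank
  calc ∑ a, c a * Module.finrank ℂ (W a) = ∑ a, (mu x a * P a).trace := by
        simp [hmu, htr]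
    _ = 0 := by
        rw [sum_trace_mu_mul]
        exact Finset.sum_eq_zero fun e _ => sub_eq_zero.2 <|
          Matrix.trace_mul_mul_proj_comm (hP _) (hPW _) (hP _) (hPW _) (hW e).1 (hW e).2

end FinQuiver

theorem Module.Dual.exists_forall_add_apply_ne_zero {K E ι : Type*} [Field K] [Infinite K]
    [AddCommGroup E] [Module K E] [Finite ι] (c : ι → K) {ℓ : ι → Module.Dual K E}
    (hℓ : ∀ i, ℓ i ≠ 0) : ∃ v, ∀ i, c i + ℓ i v ≠ 0 := by
  obtain ⟨w, hw⟩ : ∃ w, ∀ i, ℓ i w ≠ 0 := by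
    by_contra! h
    obtain ⟨i, hi⟩ := Subspace.exists_eq_top_of_iUnion_eq_univ (p := fun i => LinearMap.ker (ℓ i))
      (Set.eq_univ_of_forall fun w => Set.mem_iUnion.2 (h w))
    exact hℓ i (LinearMap.ker_eq_top.1 hi)
  obtain ⟨t, ht⟩ := (Set.finite_range fun i => -c i / ℓ i w).infinite_compl.nonempty
  refine ⟨t • w, fun i h => ht ⟨i, ?_⟩⟩
  rw [map_smul, smul_eq_mul] at h
  field_simp [hw i]
  linear_combination -h

namespace ConnData

variable (D : ConnData)

def vbarₗ : (Fin D.p → ℂ) →ₗ[ℂ] D.Vq → ℂ where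
  toFun := D.vbar
  map_add' v w := by
    ext (⟨⟨i, _⟩, _⟩ | _)
    · by_cases h : i = 0
      · subst h
        simp only [vbar, dite_true, Pi.add_apply, ← Finset.sum_filter, Finset.sum_add_distrib]
        ring
      · simp [vbar, h]
    · simp [vbar]
  map_smul' t v := by
    ext (⟨⟨i, _⟩, _⟩ | _)
    · by_cases h : i = 0
      · subst h
        simp only [vbar, dite_true, Pi.smul_apply, smul_eq_mul, ← Finset.sum_filter,
          ← Finset.mul_sum, RingHom.id_apply]
        ring
      · simp [vbar, h]
    · simp [vbar]

theorem vbar_single_pred_vmid (i : D.IrrNz) (k : D.IrrIdx) (j : Fin (D.m k.1)) :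
    D.vbar (Pi.single (i.1.pred i.2.2) 1) (D.vmid k j) =
      (if k = ⟨i.1, i.2.1⟩ then 1 else 0) - if k = D.irr0 then 1 else 0 := by
  obtain ⟨⟨i, hirr, hi⟩, k, hk⟩ := i, k
  by_cases h : k = 0
  · subst h
    have hne : ¬ (⟨0, hk⟩ : D.IrrIdx) = ⟨i, hirr⟩ := fun h => hi (congrArg Subtype.val h).symm
    have hreg (x : Fin D.p) :
        (if ¬ D.isIrr x.succ then (Pi.single (i.pred hi) 1 : Fin D.p → ℂ) x else 0) = 0 := by
      rcases eq_or_ne x (i.pred hi) with rfl | hx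
      · simp [hirr]
      · simp [hx]
    simp [vbar, vmid, irr0, hne, hreg]
  · simp [vbar, vmid, irr0, h, Pi.single_apply, Fin.pred_inj, Subtype.ext_iff]

theorem sum_vbar_single_pred_mul (i : D.IrrNz) (β : D.Vq → ℂ) :
    ∑ a, D.vbar (Pi.single (i.1.pred i.2.2) 1) a * β a =
      ∑ j, β (D.vmid ⟨i.1, i.2.1⟩ j) - ∑ j, β (D.vmid0 j) := by
  have hleg : ∀ y, D.vbar (Pi.single (i.1.pred i.2.2) 1) (Sum.inr y) = 0 := fun _ => rfl
  have hmid := D.vbar_single_pred_vmid i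
  simp only [vmid] at hmid
  rw [Fintype.sum_sum_type, Fintype.sum_sigma]
  simp only [hleg, zero_mul, Finset.sum_const_zero, add_zero, hmid, sub_mul, ite_mul, one_mul,
    Finset.sum_sub_distrib]
  rw [Fintype.sum_eq_single ⟨i.1, i.2.1⟩ fun k hk => by simp [hk],
    Fintype.sum_eq_single D.irr0 fun k hk => by simp [hk]]
  simp only [if_true, vmid, vmid0]
  rfl

theorem exists_sum_vbar_mul_ne_zero {β : D.Vq → ℤ} (hβ : β ∉ D.latt) :
    ∃ v, ∑ a, D.vbar v a * β a ≠ 0 := by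
  simp only [latt, Set.mem_ofPred_eq, not_forall] at hβ
  obtain ⟨i, hi⟩ := hβ
  refine ⟨Pi.single (i.1.pred i.2.2) 1, ?_⟩
  rw [sum_vbar_single_pred_mul, sub_ne_zero]
  exact_mod_cast Ne.symm hi

theorem exists_shift_forall_sum_ne_zero :
    ∃ v : Fin D.p → ℂ, ∀ β : D.Vq → ℕ, (∀ a, β a ≤ D.alphaV a) →
      (fun a => (β a : ℤ)) ∉ D.latt → ∑ a, (D.lamV a + D.vbar v a) * β a ≠ 0 := by
  let ι := {β : (a : D.Vq) → Fin (D.alphaV a + 1) // (fun a => ((β a : ℕ) : ℤ)) ∉ D.latt}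
  obtain ⟨v, hv⟩ := Module.Dual.exists_forall_add_apply_ne_zero
    (fun β : ι => ∑ a, D.lamV a * (β.1 a : ℕ))
    (ℓ := fun β => Fintype.linearCombination ℂ (fun a => ((β.1 a : ℕ) : ℂ)) ∘ₗ D.vbarₗ)
    fun β hβ => by
      obtain ⟨v, hv⟩ := D.exists_sum_vbar_mul_ne_zero β.2
      exact hv (by simpa [vbarₗ, Fintype.linearCombination_apply] using LinearMap.congr_fun hβ v)
  refine ⟨v, fun β hβα hβ => ?_⟩
  simpa [vbarₗ, Fintype.linearCombination_apply, add_mul, Finset.sum_add_distrib] using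
    hv ⟨fun a => ⟨β a, Nat.lt_succ_of_le (hβα a)⟩, hβ⟩

end ConnData

open ConnData FinQuiver in
/-- STATEMENT 9. -/
theorem exists_shift_Lirreducible_iff_irreducible (D : ConnData) :
    ∃ v : Fin D.p → ℂ,
      ∀ x : D.quiv.Rep D.alphaV,
        (∀ a, FinQuiver.mu x a =
          (D.lamV a + D.vbar v a) • (1 : Matrix (Fin (D.alphaV a)) (Fin (D.alphaV a)) ℂ)) →
        ((D.LIrred x ∧ D.DetCond x) ↔ (FinQuiver.Irred x ∧ D.DetCond x)) := by
  obtain ⟨v, hv⟩ := D.exists_shift_forall_sum_ne_zero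
  refine ⟨v, fun x hmu => ⟨fun ⟨hL, hdet⟩ => ⟨fun W hW => hL W hW ?_, hdet⟩,
    fun ⟨hI, hdet⟩ => ⟨fun W hW _ => hI W hW, hdet⟩⟩⟩
  by_contra hβ
  refine hv (fun a => Module.finrank ℂ (W a)) (fun a => ?_) hβ ?_
  · simpa using (W a).finrank_le
  · exact_mod_cast sum_mul_finrank_eq_zero_of_mu_eq_smul x _ hmu hW
end
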